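/- arXiv:1108.3379 — 3 statements merged into one kernel-verified Lean document; each statement's English description precedes it below -/
import Mathlib

section
/- Let k be any field and G a finite M-group contained in GL_n(k), acting naturally on the rational function field k(x_1, …, x_n). Then there exist a root of unity ζ_m ∈ k and nonzero elements b_1, …, b_n ∈ k such that, setting y_i = b_i x_i for 1 ≤ i ≤ n, for every σ ∈ G and every 1 ≤ i ≤ n one has σ(y_i) = c · y_j for some c in the multiplicative subgroup ⟨ζ_m⟩ of k^× generated by ζ_m and some 1 ≤ j ≤ n. -/
noncomputable section

open MvPolynomial

/-- A finite subgroup `G ≤ GL_n(k)` is an `M`-group if every `σ ∈ G` has exactly one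
nonzero entry in each column. -/
def IsMGroup {k : Type} [Field k] {n : ℕ} (G : Subgroup (GL (Fin n) k)) : Prop :=
  ∀ σ ∈ G, ∀ j : Fin n, ∃! i : Fin n, (σ : Matrix (Fin n) (Fin n) k) i j ≠ 0

/-- The natural action of `σ ∈ GL_n(k)` on `k[x_1, …, x_n]`: `σ ⬝ x_j = ∑ i, a_{ij} x_i`. -/
noncomputable def glAct {k : Type} [Field k] {n : ℕ} (σ : GL (Fin n) k) :
    MvPolynomial (Fin n) k →ₐ[k] MvPolynomial (Fin n) k :=
  aeval (fun j => ∑ i, C ((σ : Matrix (Fin n) (Fin n) k) i j) * X i)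

/-! An `M`-group acts on the coordinates by a permutation `σ • j` twisted by nonzero scalars
`e σ j`, which satisfy a cocycle identity. Pick a representative `r` of each orbit and, for each
`i`, an `s i` with `s i • r = i`. Rescaling `y_i = e (s i) r • x_i` turns the scalar by which `σ`
maps `y_i` to `y_{σ • i}` into `e τ r`, where `τ = (s (σ • i))⁻¹ σ (s i)` fixes `r`. On the
stabilizer of `r`, `e (·) r` is a homomorphism, so these scalars are `|G|`-th roots of unity, and
the `|G|`-th roots of unity in a field form a cyclic group. -/

open MulAction

section Cocycle

variable {G α M : Type*} [Group G] [MulAction G α] [CommGroup M]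

/-- `σ • x_j = e σ j • x_{σ • j}` is an action of `G` by monomial substitutions exactly when
`e` satisfies this identity. -/
def IsCocycle (e : G → α → M) : Prop :=
  ∀ σ τ j, e (σ * τ) j = e σ (τ • j) * e τ j

variable {e : G → α → M}

theorem IsCocycle.apply_one (he : IsCocycle e) (j : α) : e 1 j = 1 := by
  have h := he 1 1 j
  rwa [one_mul, one_smul, left_eq_mul] at h

theorem IsCocycle.apply_pow_of_smul_eq (he : IsCocycle e) {τ : G} {r : α} (hτ : τ • r = r)
    (N : ℕ) : e (τ ^ N) r = e τ r ^ N := by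
  induction N with
  | zero => simp [he.apply_one]
  | succ N ih => rw [pow_succ, he, hτ, ih, pow_succ]

theorem IsCocycle.apply_pow_card_of_smul_eq [Finite G] (he : IsCocycle e) {τ : G} {r : α}
    (hτ : τ • r = r) : e τ r ^ Nat.card G = 1 := by
  rw [← he.apply_pow_of_smul_eq hτ, pow_card_eq_one', he.apply_one]

theorem IsCocycle.mul_apply_conj (he : IsCocycle e) (σ s t : G) {r : α}
    (h : (t⁻¹ * σ * s) • r = r) : e t r * e (t⁻¹ * σ * s) r = e σ (s • r) * e s r := by
  have h1 := he t (t⁻¹ * σ * s) r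
  rw [h, show t * (t⁻¹ * σ * s) = σ * s by group] at h1
  rw [← h1, he]

theorem IsCocycle.exists_pow_card_eq_one [Finite G] (he : IsCocycle e) :
    ∃ b : α → M, ∀ σ i, (b i * e σ i / b (σ • i)) ^ Nat.card G = 1 := by
  let rep (i : α) : α := (Quotient.mk (orbitRel G α) i).out
  have rep_smul (σ : G) (i : α) : rep (σ • i) = rep i := by
    simp only [rep, Quotient.sound (orbitRel_apply.mpr (mem_orbit i σ))]
  have exists_smul_rep (i : α) : ∃ s : G, s • rep i = i := by
    have h : rep i ∈ orbit G i := orbitRel_apply.mp (Quotient.mk_out (s := orbitRel G α) i)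
    obtain ⟨g, hg⟩ := h
    exact ⟨g⁻¹, by rw [← hg, inv_smul_smul]⟩
  choose s hs using exists_smul_rep
  refine ⟨fun i => e (s i) (rep i), fun σ i => ?_⟩
  show (e (s i) (rep i) * e σ i / e (s (σ • i)) (rep (σ • i))) ^ _ = 1
  have hfix : ((s (σ • i))⁻¹ * σ * s i) • rep i = rep i := by
    rw [mul_smul, mul_smul, hs, inv_smul_eq_iff, ← rep_smul σ i, hs]
  have hconj := he.mul_apply_conj σ (s i) (s (σ • i)) hfix
  rw [hs] at hconj
  rw [rep_smul, mul_comm (e (s i) _), ← hconj, mul_div_cancel_left]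
  exact he.apply_pow_card_of_smul_eq hfix

end Cocycle

namespace IsMGroup

variable {k : Type} [Field k] {n : ℕ} {G : Subgroup (GL (Fin n) k)} (hM : IsMGroup G)

/-- `σ` maps `x_j` to a multiple of `x_{row σ j}`. -/
def row (σ : G) (j : Fin n) : Fin n := (hM σ σ.2 j).exists.choose

theorem apply_row_ne_zero (σ : G) (j : Fin n) :
    ((σ : GL (Fin n) k) : Matrix (Fin n) (Fin n) k) (hM.row σ j) j ≠ 0 :=
  (hM σ σ.2 j).exists.choose_spec

theorem eq_row_of_apply_ne_zero {σ : G} {i j : Fin n}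
    (h : ((σ : GL (Fin n) k) : Matrix (Fin n) (Fin n) k) i j ≠ 0) : i = hM.row σ j :=
  (hM σ σ.2 j).unique h (hM.apply_row_ne_zero σ j)

theorem apply_eq_zero_of_ne_row {σ : G} {i j : Fin n} (h : i ≠ hM.row σ j) :
    ((σ : GL (Fin n) k) : Matrix (Fin n) (Fin n) k) i j = 0 :=
  not_not.mp (mt hM.eq_row_of_apply_ne_zero h)

def entry (σ : G) (j : Fin n) : kˣ := Units.mk0 _ (hM.apply_row_ne_zero σ j)

theorem mul_apply_row_row (σ τ : G) (j : Fin n) :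
    (((σ * τ : G) : GL (Fin n) k) : Matrix (Fin n) (Fin n) k) (hM.row σ (hM.row τ j)) j
      = hM.entry σ (hM.row τ j) * hM.entry τ j := by
  rw [Subgroup.coe_mul, Units.val_mul, Matrix.mul_apply,
    Finset.sum_eq_single_of_mem _ (Finset.mem_univ (hM.row τ j))]
  · rfl
  · intro l _ hl
    rw [hM.apply_eq_zero_of_ne_row hl, mul_zero]

theorem row_mul (σ τ : G) (j : Fin n) : hM.row (σ * τ) j = hM.row σ (hM.row τ j) := by
  refine (hM.eq_row_of_apply_ne_zero ?_).symm
  rw [hM.mul_apply_row_row]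
  exact (hM.entry σ _ * hM.entry τ j).ne_zero

theorem row_one (j : Fin n) : hM.row 1 j = j :=
  (hM.eq_row_of_apply_ne_zero (by simp)).symm

abbrev mulAction : MulAction G (Fin n) where
  smul := hM.row
  one_smul := hM.row_one
  mul_smul := hM.row_mul

theorem isCocycle_entry : letI := hM.mulAction; IsCocycle hM.entry := by
  intro σ τ j
  ext
  change _ = (hM.entry σ (hM.row τ j) : k) * hM.entry τ j
  rw [← hM.mul_apply_row_row, ← hM.row_mul]
  rfl

theorem glAct_X (σ : G) (j : Fin n) :
    glAct (σ : GL (Fin n) k) (X j) = C (hM.entry σ j : k) * X (hM.row σ j) := by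
  rw [glAct, aeval_X, Finset.sum_eq_single_of_mem _ (Finset.mem_univ (hM.row σ j))]
  · rfl
  · intro i _ hi
    rw [hM.apply_eq_zero_of_ne_row hi, map_zero, zero_mul]

end IsMGroup

theorem exists_pow_eq_one_and_mem_zpowers (R : Type*) [CommRing R] [IsDomain R] (N : ℕ)
    [NeZero N] : ∃ ζ : Rˣ, ζ ^ N = 1 ∧ ∀ c : Rˣ, c ^ N = 1 → c ∈ Subgroup.zpowers ζ := by
  obtain ⟨g, hg⟩ := IsCyclic.exists_generator (α := rootsOfUnity N R)
  refine ⟨g, g.2, fun c hc => ?_⟩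
  obtain ⟨l, hl⟩ := Subgroup.mem_zpowers_iff.mp (hg ⟨c, hc⟩)
  exact ⟨l, congrArg Subtype.val hl⟩

/-- Lemma 4.3: if `G ≤ GL_n(k)` is a finite `M`-group acting naturally on
`k(x_1, …, x_n)`, then there are a root of unity `ζ_m ∈ k` and nonzero `b_1, …, b_n ∈ k`
such that, setting `y_i = b_i x_i`, for every `σ ∈ G` and every `i` one has
`σ(y_i) = c ⬝ y_j` for some `c ∈ ⟨ζ_m⟩` and some `j`. -/
theorem mGroup_monomial_normalization
    (k : Type) [Field k] (n : ℕ) (G : Subgroup (GL (Fin n) k)) [Finite G]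
    (hM : IsMGroup G) :
    ∃ (m : ℕ) (ζ : k) (b : Fin n → k), 0 < m ∧ ζ ^ m = 1 ∧ (∀ i, b i ≠ 0) ∧
      ∀ σ ∈ G, ∀ i : Fin n, ∃ (c : k) (j : Fin n), (∃ l : ℤ, c = ζ ^ l) ∧
        glAct σ (C (b i) * X i) = C c * (C (b j) * X j) := by
  let _ := hM.mulAction
  obtain ⟨b, hb⟩ := hM.isCocycle_entry.exists_pow_card_eq_one
  obtain ⟨ζ, hζ, hζgen⟩ := exists_pow_eq_one_and_mem_zpowers k (Nat.card G)
  refine ⟨Nat.card G, ζ, fun i => b i, Nat.card_pos, by rw [← Units.val_pow_eq_pow_val, hζ,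
    Units.val_one], fun i => (b i).ne_zero, fun σ hσ i => ?_⟩
  let σ' : G := ⟨σ, hσ⟩
  let c := b i * hM.entry σ' i / b (σ' • i)
  obtain ⟨l, hl⟩ := Subgroup.mem_zpowers_iff.mp (hζgen c (hb σ' i))
  refine ⟨c, σ' • i, ⟨l, by rw [← hl, Units.val_zpow_eq_zpow_val]⟩, ?_⟩
  rw [map_mul, algHom_C, algebraMap_eq, hM.glAct_X σ' i, ← mul_assoc, ← mul_assoc, ← C_mul,
    ← C_mul, ← Units.val_mul, ← Units.val_mul, div_mul_cancel]
  rfl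
end
end

section
/- Let m be an odd positive integer, let G be a group of order 8m, let H be a normal subgroup of G of order 2m, and let σ ∈ G be an element of order 2m. Then the cyclic subgroup ⟨σ²⟩ (which has order m) is a normal subgroup of G. -/
/-!
`σ²` has order `m` and lies in `H`, because the image of `σ` in the group `G ⧸ H` of order `4`
has order dividing `gcd(4, 2m) = 2`. So `K = ⟨σ²⟩` has index `2` in `H`. An element of `H` whose
order is odd cannot map to the generator of `H ⧸ K`, so `K` consists of all elements of `H` of
order dividing `m`; this description is invariant under conjugation by `G` since `H` is normal.
-/

namespace Subgroup

variable {G : Type*} [Group G]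

theorem pow_gcd_index_orderOf_mem (H : Subgroup G) [H.Normal] (g : G) :
    g ^ Nat.gcd H.index (orderOf g) ∈ H := by
  rw [← QuotientGroup.eq_one_iff, QuotientGroup.mk_pow, pow_gcd_eq_one, ← QuotientGroup.mk_pow,
    ← QuotientGroup.mk_pow, QuotientGroup.eq_one_iff, QuotientGroup.eq_one_iff,
    pow_orderOf_eq_one]
  exact ⟨H.pow_index_mem g, H.one_mem⟩

theorem mem_of_index_eq_two_of_pow_eq_one {K : Subgroup G} (hK : K.index = 2) {m : ℕ}
    (hm : Odd m) {x : G} (hx : x ^ m = 1) : x ∈ K := by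
  have : K.Normal := normal_of_index_eq_two hK
  have hodd : Odd (orderOf x) := hm.of_dvd_nat (orderOf_dvd_of_pow_eq_one hx)
  simpa [hK, Nat.coprime_two_left.mpr hodd] using K.pow_gcd_index_orderOf_mem x

theorem normal_of_relIndex_eq_two_of_odd_card {H K : Subgroup G} (hH : H.Normal) (hKH : K ≤ H)
    (hK : K.relIndex H = 2) (hodd : Odd (Nat.card K)) : K.Normal where
  conj_mem n hn g := by
    have hconj : g * n * g⁻¹ ∈ H := hH.conj_mem n (hKH hn) g
    have hpow : (g * n * g⁻¹) ^ Nat.card K = 1 := by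
      have : n ^ Nat.card K = 1 := by
        simpa only [coe_pow, coe_one] using
          congrArg Subtype.val (pow_card_eq_one' (x := (⟨n, hn⟩ : K)))
      rw [conj_pow, this, mul_one, mul_inv_cancel]
    have := mem_of_index_eq_two_of_pow_eq_one hK hodd
      (x := (⟨g * n * g⁻¹, hconj⟩ : H)) (Subtype.ext (by simpa using hpow))
    rwa [mem_subgroupOf] at this

end Subgroup

theorem zpowers_sq_normal_of_odd_general
    (G : Type) [Group G] (m : ℕ) (hm : Odd m)
    (hG : Nat.card G = 8 * m)
    (H : Subgroup G) (hH : H.Normal) (hHcard : Nat.card H = 2 * m)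
    (σ : G) (hσ : orderOf σ = 2 * m) :
    Nat.card (Subgroup.zpowers (σ ^ 2)) = m ∧ (Subgroup.zpowers (σ ^ 2)).Normal := by
  have hcard : Nat.card (Subgroup.zpowers (σ ^ 2)) = m := by
    rw [Nat.card_zpowers, orderOf_pow' σ two_ne_zero, hσ, Nat.gcd_mul_right_left]
    omega
  refine ⟨hcard, ?_⟩
  set K := Subgroup.zpowers (σ ^ 2)
  have hHindex : H.index = 4 := by
    have := H.card_mul_index
    rw [hHcard, hG] at this
    exact Nat.eq_of_mul_eq_mul_left hm.pos (by linarith)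
  have hKindex : K.index = 8 := by
    have := K.card_mul_index
    rw [hcard, hG] at this
    exact Nat.eq_of_mul_eq_mul_left hm.pos (by linarith)
  have hσH : σ ^ 2 ∈ H := by
    have hgcd : Nat.gcd 4 (2 * m) = 2 := by
      rw [show 4 = 2 * 2 by rfl, Nat.gcd_mul_left, Nat.coprime_two_left.mpr hm]
    simpa [hHindex, hσ, hgcd] using H.pow_gcd_index_orderOf_mem σ
  have hKH : K ≤ H := Subgroup.zpowers_le.mpr hσH
  have hrel : K.relIndex H = 2 := by
    have := Subgroup.relIndex_mul_index hKH
    rw [hHindex, hKindex] at this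
    omega
  exact Subgroup.normal_of_relIndex_eq_two_of_odd_card hH hKH hrel (hcard ▸ hm)

/-- Step 1 of the proof of Theorem 1.8, Case 3: if `|G| = 8m` with `m` odd, `H ◁ G` has
order `2m`, and `σ ∈ G` has order `2m`, then `⟨σ²⟩` has order `m` and is normal in `G`. -/
theorem zpowers_sq_normal_of_odd
    (G : Type) [Group G] (m : ℕ) (hm : Odd m) (hm0 : 0 < m)
    (hG : Nat.card G = 8 * m)
    (H : Subgroup G) (hH : H.Normal) (hHcard : Nat.card H = 2 * m)
    (σ : G) (hσ : orderOf σ = 2 * m) :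
    Nat.card (Subgroup.zpowers (σ ^ 2)) = m ∧ (Subgroup.zpowers (σ ^ 2)).Normal :=
  zpowers_sq_normal_of_odd_general G m hm hG H hH hHcard σ hσ
end

section
/- Let m be an odd positive integer and let G be a group of order 8m containing an element σ of order 2m such that the cyclic subgroup ⟨σ²⟩ is normal in G and every Sylow 2-subgroup of G is abelian. Then σ^m lies in the center Z(G) of G, and the cyclic subgroup ⟨σ⟩ is normal in G. -/
/-!
`τ = σ ^ m` has order `2`, so it lies in some Sylow `2`-subgroup `P`; as `P` is abelian, the
centralizer of `τ` contains both `P` (order divisible by `8`) and `⟨σ⟩` (order `2m`), hence has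
order `8m` and is all of `G`. Since `gcd (m, 2) = 1`, `⟨σ⟩ = ⟨σ ^ m⟩ ⊔ ⟨σ ^ 2⟩` is generated by a
central and a normal cyclic subgroup, so it is normal.
-/

namespace Subgroup

variable {G : Type*} [Group G]

theorem normal_of_le_center {H : Subgroup G} (hH : H ≤ center G) : H.Normal where
  conj_mem n hn g := by
    rwa [mem_center_iff.mp (hH hn) g, mul_inv_cancel_right]

theorem zpowers_pow_sup_zpowers_pow_of_coprime (g : G) {a b : ℕ} (hab : a.Coprime b) :
    zpowers (g ^ a) ⊔ zpowers (g ^ b) = zpowers g := by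
  refine le_antisymm (sup_le (zpowers_le.mpr (pow_mem (mem_zpowers g) a))
    (zpowers_le.mpr (pow_mem (mem_zpowers g) b))) (zpowers_le.mpr ?_)
  have bezout : g = (g ^ a) ^ a.gcdA b * (g ^ b) ^ a.gcdB b := by
    rw [← zpow_natCast, ← zpow_natCast, ← zpow_mul, ← zpow_mul, ← zpow_add,
      ← Nat.gcd_eq_gcd_ab, hab.gcd_eq_one, Nat.cast_one, zpow_one]
  have hmem : (g ^ a) ^ a.gcdA b * (g ^ b) ^ a.gcdB b ∈ zpowers (g ^ a) ⊔ zpowers (g ^ b) :=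
    mul_mem (mem_sup_left (zpow_mem (mem_zpowers _) _)) (mem_sup_right (zpow_mem (mem_zpowers _) _))
  rwa [← bezout] at hmem

theorem eq_top_of_coprime_dvd_card [Finite G] (H : Subgroup G) {a b : ℕ} (hab : a.Coprime b)
    (hG : Nat.card G = a * b) (ha : a ∣ Nat.card H) (hb : b ∣ Nat.card H) : H = ⊤ :=
  H.eq_top_of_card_eq <|
    Nat.dvd_antisymm H.card_subgroup_dvd_card (hG ▸ hab.mul_dvd_of_dvd_of_dvd ha hb)

end Subgroup

open Subgroup in
theorem IsPGroup.exists_sylow_le_centralizer {G : Type*} [Group G] {p : ℕ} {x : G}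
    (hx : IsPGroup p (zpowers x))
    (hsyl : ∀ P : Sylow p G, ∀ y z : (P : Subgroup G), y * z = z * y) :
    ∃ P : Sylow p G, (P : Subgroup G) ≤ centralizer {x} := by
  obtain ⟨P, hP⟩ := hx.exists_le_sylow
  exact ⟨P, fun y hy => mem_centralizer_singleton_iff.mpr
    (congrArg Subtype.val (hsyl P ⟨y, hy⟩ ⟨x, hP (mem_zpowers x)⟩))⟩

open Subgroup in
theorem zpowers_normal_and_central_power_general
    (G : Type) [Group G] (m : ℕ) (hm : Odd m)
    (hG : Nat.card G = 8 * m)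
    (σ : G) (hσ : orderOf σ = 2 * m)
    (hnorm : (Subgroup.zpowers (σ ^ 2)).Normal)
    (hsyl : ∀ P : Sylow 2 G, ∀ x y : (P : Subgroup G), x * y = y * x) :
    σ ^ m ∈ Subgroup.center G ∧ (Subgroup.zpowers σ).Normal := by
  have : Finite G := Nat.finite_of_card_ne_zero (hG ▸ (Nat.mul_pos (by norm_num) hm.pos).ne')
  have : Fact (Nat.Prime 2) := ⟨Nat.prime_two⟩
  have horder : Nat.card (zpowers (σ ^ m)) = 2 ^ 1 := by
    rw [Nat.card_zpowers, orderOf_pow_of_dvd hm.pos.ne' (hσ ▸ dvd_mul_left m 2), hσ,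
      Nat.mul_div_cancel _ hm.pos, pow_one]
  obtain ⟨P, hP⟩ := (IsPGroup.of_card horder).exists_sylow_le_centralizer hsyl
  have h8 : 8 ∣ Nat.card (centralizer {σ ^ m}) :=
    (P.pow_dvd_card_of_pow_dvd_card (n := 3) (hG ▸ dvd_mul_right _ m)).trans
      (card_dvd_of_le hP)
  have hσC : zpowers σ ≤ centralizer {σ ^ m} :=
    zpowers_le.mpr (mem_centralizer_singleton_iff.mpr (Commute.self_pow σ m).eq)
  have hm_dvd : m ∣ Nat.card (centralizer {σ ^ m}) :=
    (Dvd.intro_left 2 (Nat.card_zpowers σ ▸ hσ).symm).trans (card_dvd_of_le hσC)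
  have hC := (centralizer {σ ^ m}).eq_top_of_coprime_dvd_card
    (Nat.Coprime.pow_left 3 hm.coprime_two_left) hG h8 hm_dvd
  have hcen : σ ^ m ∈ center G := centralizer_eq_top_iff_subset.mp hC rfl
  have hcentral : (zpowers (σ ^ m)).Normal := normal_of_le_center (zpowers_le.mpr hcen)
  refine ⟨hcen, ?_⟩
  rw [← zpowers_pow_sup_zpowers_pow_of_coprime σ hm.coprime_two_right]
  exact sup_normal _ _

/-- Step 3 of the proof of Theorem 1.8, Case 3: if `|G| = 8m` with `m` odd, `σ ∈ G` has
order `2m`, `⟨σ²⟩` is normal in `G`, and all Sylow `2`-subgroups of `G` are abelian,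
then `σ^m` is central and `⟨σ⟩` is normal in `G`. -/
theorem zpowers_normal_and_central_power
    (G : Type) [Group G] (m : ℕ) (hm : Odd m) (hm0 : 0 < m)
    (hG : Nat.card G = 8 * m)
    (σ : G) (hσ : orderOf σ = 2 * m)
    (hnorm : (Subgroup.zpowers (σ ^ 2)).Normal)
    (hsyl : ∀ P : Sylow 2 G, ∀ x y : (P : Subgroup G), x * y = y * x) :
    σ ^ m ∈ Subgroup.center G ∧ (Subgroup.zpowers σ).Normal :=
  zpowers_normal_and_central_power_general G m hm hG σ hσ hnorm hsyl
end
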